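/- arXiv:2008.01629 — 2 statements merged into one kernel-verified Lean document; each statement's English description precedes it below -/
import Mathlib

section
/- For every element b = (d,d',p,p',n,n') of the twisted algebra with π(b) = diag_C(R, N), the twisted commutator of γ⁵⊗D_Y with π(b) is supported on the particle block: [γ⁵⊗D_Y, π(b)]_ρ = diag_C(S, 0), where S := (η⊗D₀)·R − ρ(R)·(η⊗D₀); in particular the antiparticle block vanishes identically: (η⊗D₀†)·N − ρ(N)·(η⊗D₀†) = 0. -/
open Matrix

noncomputable section

namespace TwistSM

/-! ### Dirac matrices -/

def pauli1 : Matrix (Fin 2) (Fin 2) ℂ := !![0, 1; 1, 0]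
def pauli2 : Matrix (Fin 2) (Fin 2) ℂ := !![0, -Complex.I; Complex.I, 0]
def pauli3 : Matrix (Fin 2) (Fin 2) ℂ := !![1, 0; 0, -1]

/-- σ^μ = (I₂, −iσ₁, −iσ₂, −iσ₃) -/
def sigE : Fin 4 → Matrix (Fin 2) (Fin 2) ℂ :=
  ![1, (-Complex.I) • pauli1, (-Complex.I) • pauli2, (-Complex.I) • pauli3]
/-- σ̃^μ = (I₂, iσ₁, iσ₂, iσ₃) -/
def sigTE : Fin 4 → Matrix (Fin 2) (Fin 2) ℂ :=
  ![1, Complex.I • pauli1, Complex.I • pauli2, Complex.I • pauli3]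

/-- Diagonal 2×2 block matrix [[A,0],[0,B]] over a leading `Fin 2` index. -/
def dgB {m : Type} (A B : Matrix m m ℂ) : Matrix (Fin 2 × m) (Fin 2 × m) ℂ :=
  Matrix.of fun p q =>
    if p.1 = q.1 then (if p.1 = 0 then A p.2 q.2 else B p.2 q.2) else 0

/-- Off-diagonal 2×2 block matrix [[0,A],[B,0]] over a leading `Fin 2` index. -/
def odB {m : Type} (A B : Matrix m m ℂ) : Matrix (Fin 2 × m) (Fin 2 × m) ℂ :=
  Matrix.of fun p q =>
    if p.1 = 0 then (if q.1 = 0 then 0 else A p.2 q.2)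
    else (if q.1 = 0 then B p.2 q.2 else 0)

/-- Euclidean Dirac matrices γ^μ_E = [[0, σ^μ],[σ̃^μ, 0]], acting on the spinor
indices (s, ṡ). -/
def gammaE (μ : Fin 4) : Matrix (Fin 2 × Fin 2) (Fin 2 × Fin 2) ℂ := odB (sigE μ) (sigTE μ)

/-- Entrywise complex conjugation of a matrix. -/
def mconj {m n : Type} (A : Matrix m n ℂ) : Matrix m n ℂ := A.map (starRingEnd ℂ)

/-- C = i γ⁰_E γ²_E (the matrix part of the charge conjugation 𝒥 = C ∘ cc). -/
def Kspin : Matrix (Fin 2 × Fin 2) (Fin 2 × Fin 2) ℂ := Complex.I • (gammaE 0 * gammaE 2)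

/-! ### The twisted algebra and its representation on ℂ¹²⁸ -/

/-- Quaternionic 2×2 matrices: of the form [[α,β],[−conj β, conj α]]. -/
def IsQuat (q : Matrix (Fin 2) (Fin 2) ℂ) : Prop :=
  q 1 0 = -(starRingEnd ℂ) (q 0 1) ∧ q 1 1 = (starRingEnd ℂ) (q 0 0)

/-- An element (c, c', q, q', m, m') of the twisted algebra. -/
structure Alg : Type where
  c : ℂ
  c' : ℂ
  q : Matrix (Fin 2) (Fin 2) ℂ
  q' : Matrix (Fin 2) (Fin 2) ℂ
  m : Matrix (Fin 3) (Fin 3) ℂ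
  m' : Matrix (Fin 3) (Fin 3) ℂ
  hq : IsQuat q
  hq' : IsQuat q'

/-- The twist ρ: exchange primed and unprimed entries. -/
def Alg.rho (a : Alg) : Alg := ⟨a.c', a.c, a.q', a.q, a.m', a.m, a.hq', a.hq⟩

/-- Flavour index α, as a pair (flavour pair, index within the pair):
(0,0) = 1̇, (0,1) = 2̇, (1,0) = 1, (1,1) = 2. -/
abbrev Flav : Type := Fin 2 × Fin 2
/-- Internal index (I, α): lepto-colour I ∈ Fin 4 and flavour α. -/
abbrev Intl : Type := Fin 4 × Flav
/-- (ṡ, (I, α)) -/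
abbrev HalfNoS : Type := Fin 2 × Intl
/-- Half of the full space: (s, ṡ, (I, α)). -/
abbrev Half : Type := Fin 2 × HalfNoS
/-- ℂ¹²⁸, indexed by (C, s, ṡ, (I, α)). -/
abbrev Full : Type := Fin 2 × Half

/-- diag(c, conj c) as a 2×2 matrix. -/
def cdiag (c : ℂ) : Matrix (Fin 2) (Fin 2) ℂ := Matrix.diagonal ![c, (starRingEnd ℂ) c]

def pred3 (i : Fin 4) : Fin 3 := ⟨i.val - 1, by have := i.isLt; omega⟩

/-- diag(c, m) as a 4×4 matrix on the lepto-colour index. -/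
def sm4 (c : ℂ) (m : Matrix (Fin 3) (Fin 3) ℂ) : Matrix (Fin 4) (Fin 4) ℂ :=
  Matrix.of fun i j =>
    if i = 0 then (if j = 0 then c else 0)
    else if j = 0 then 0 else m (pred3 i) (pred3 j)

/-- Q_r = diag(c, conj c, q') on the flavour index. -/
def Qr (a : Alg) : Matrix Flav Flav ℂ := dgB (cdiag a.c) a.q'
/-- Q_l = diag(c', conj c', q) on the flavour index. -/
def Ql (a : Alg) : Matrix Flav Flav ℂ := dgB (cdiag a.c') a.q

/-- diag_α(A⊗I₂, B⊗I₂) on (I, α). -/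
def msect (A B : Matrix (Fin 4) (Fin 4) ℂ) : Matrix Intl Intl ℂ :=
  Matrix.of fun p q =>
    if p.2 = q.2 then (if p.2.1 = 0 then A p.1 q.1 else B p.1 q.1) else 0

/-- M_r = diag_α(𝗆⊗I₂, 𝗆'⊗I₂). -/
def Mr (a : Alg) : Matrix Intl Intl ℂ := msect (sm4 a.c a.m) (sm4 a.c' a.m')
/-- M_l = diag_α(𝗆'⊗I₂, 𝗆⊗I₂). -/
def Ml (a : Alg) : Matrix Intl Intl ℂ := msect (sm4 a.c' a.m') (sm4 a.c a.m)

/-- Lift a flavour matrix to (ṡ, (I, α)), acting trivially on ṡ and I. -/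
def liftQ (X : Matrix Flav Flav ℂ) : Matrix HalfNoS HalfNoS ℂ :=
  Matrix.of fun p q => if p.1 = q.1 ∧ p.2.1 = q.2.1 then X p.2.2 q.2.2 else 0

/-- Lift a matrix on (I, α) to (ṡ, (I, α)), acting trivially on ṡ. -/
def liftI (X : Matrix Intl Intl ℂ) : Matrix HalfNoS HalfNoS ℂ :=
  Matrix.of fun p q => if p.1 = q.1 then X p.2 q.2 else 0

/-- The Q-block of the representation: diag_s(Q_r, Q_l), trivial on ṡ and I. -/
def Qmat (a : Alg) : Matrix Half Half ℂ := dgB (liftQ (Qr a)) (liftQ (Ql a))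
/-- The M-block of the representation: diag_s(M_r, M_l), trivial on ṡ. -/
def Mmat (a : Alg) : Matrix Half Half ℂ := dgB (liftI (Mr a)) (liftI (Ml a))

/-- The representation π(a) = diag_C(Q, M) of the twisted algebra on ℂ¹²⁸. -/
def rep (a : Alg) : Matrix Full Full ℂ := dgB (Qmat a) (Mmat a)

/-- Twisted commutator [T, π(b)]_ρ = T·π(b) − π(ρ(b))·T. -/
def tcomm (T : Matrix Full Full ℂ) (b : Alg) : Matrix Full Full ℂ :=
  T * rep b - rep b.rho * T

/-- K = (i γ⁰_E γ²_E) ⊗ ξ ⊗ I₁₆ (with ξ on the internal index C);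
the real structure is J = K ∘ cc. -/
def Kmat : Matrix Full Full ℂ :=
  Matrix.of fun p q =>
    (!![0, 1; 1, 0] : Matrix (Fin 2) (Fin 2) ℂ) p.1 q.1 *
      Kspin (p.2.1, p.2.2.1) (q.2.1, q.2.2.1) *
      (if p.2.2.2 = q.2.2.2 then 1 else 0)

/-- J T J⁻¹ = −K · conj(T) · conj(K) as a matrix operation. -/
def Jconj (T : Matrix Full Full ℂ) : Matrix Full Full ℂ := -(Kmat * mconj T * mconj Kmat)

/-! ### Yukawa and Majorana parts of the Dirac operator -/

/-- 𝗄^I = diag(k_u^I, k_d^I). -/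
def kdiag (kν ke ku kd : ℂ) (i : Fin 4) : Matrix (Fin 2) (Fin 2) ℂ :=
  if i = 0 then Matrix.diagonal ![kν, ke] else Matrix.diagonal ![ku, kd]

/-- Block-diagonal matrix on (I, α) from a family of flavour matrices. -/
def diagI (F : Fin 4 → Matrix Flav Flav ℂ) : Matrix Intl Intl ℂ :=
  Matrix.of fun p q => if p.1 = q.1 then F p.1 p.2 q.2 else 0

/-- The Yukawa mass matrix D₀ = diag_I(D₀^I), D₀^I = [[0, conj 𝗄^I],[𝗄^I, 0]]. -/
def D0 (kν ke ku kd : ℂ) : Matrix Intl Intl ℂ :=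
  diagI fun i => odB (mconj (kdiag kν ke ku kd i)) (kdiag kν ke ku kd i)

/-- η ⊗ X, with η = diag_s(1,−1) ⊗ I₂ on (s, ṡ) and X on (I, α). -/
def etaD (X : Matrix Intl Intl ℂ) : Matrix Half Half ℂ := dgB (liftI X) (liftI (-X))

/-- γ⁵ ⊗ D_Y = diag_C(η⊗D₀, η⊗D₀†). -/
def g5DY (kν ke ku kd : ℂ) : Matrix Full Full ℂ :=
  dgB (etaD (D0 kν ke ku kd)) (etaD ((D0 kν ke ku kd)ᴴ))

/-- Ξ = diag(1,0,0,0)_I ⊗ diag(1,0,0,0)_α on (I, α). -/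
def XiI : Matrix Intl Intl ℂ :=
  Matrix.of fun p q =>
    if p = q ∧ p.1 = 0 ∧ p.2 = ((0 : Fin 2), (0 : Fin 2)) then 1 else 0

/-- γ⁵ ⊗ D_M = [[0, η⊗D_R],[η⊗D_R†, 0]]_C with D_R = k_R Ξ. -/
def g5DM (kR : ℂ) : Matrix Full Full ℂ :=
  odB (etaD (kR • XiI)) (etaD ((kR • XiI)ᴴ))

/-! ### The free 1-form -/

/-- Lift a spinor matrix (on (s, ṡ)) to ℂ¹²⁸, identity on C and (I, α). -/
def liftSpin (G : Matrix (Fin 2 × Fin 2) (Fin 2 × Fin 2) ℂ) : Matrix Full Full ℂ :=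
  Matrix.of fun p q =>
    (if p.1 = q.1 ∧ p.2.2.2 = q.2.2.2 then 1 else 0) * G (p.2.1, p.2.2.1) (q.2.1, q.2.2.1)

/-- Q_μ = diag_s(Q^r_μ, Q^l_μ), Q^{r/l}_μ = diag(c^{r/l}, conj c^{r/l}, q^{r/l}),
trivial on ṡ and I. -/
def freeQ (cr cl : ℂ) (qr ql : Matrix (Fin 2) (Fin 2) ℂ) : Matrix Half Half ℂ :=
  dgB (liftQ (dgB (cdiag cr) qr)) (liftQ (dgB (cdiag cl) ql))

/-- M_μ = diag_s(M^r_μ, M^l_μ), M^r_μ = diag_α(𝗆^r⊗I₂, 𝗆^l⊗I₂), 𝗆^{r/l} = diag(c^{r/l}, m^{r/l}),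
trivial on ṡ. -/
def freeM (cr cl : ℂ) (mr ml : Matrix (Fin 3) (Fin 3) ℂ) : Matrix Half Half ℂ :=
  dgB (liftI (msect (sm4 cr mr) (sm4 cl ml))) (liftI (msect (sm4 cl ml) (sm4 cr mr)))

/-- The free 1-form coefficient matrix A_μ = diag_C(Q_μ, M_μ). -/
def freeA (cr cl : ℂ) (qr ql : Matrix (Fin 2) (Fin 2) ℂ)
    (mr ml : Matrix (Fin 3) (Fin 3) ℂ) : Matrix Full Full ℂ :=
  dgB (freeQ cr cl qr ql) (freeM cr cl mr ml)

/-! ### Partial derivatives -/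

/-- Partial derivative in the μ-th coordinate direction of ℝ⁴ (ℂ-valued). -/
def pdC (μ : Fin 4) (f : (Fin 4 → ℝ) → ℂ) (x : Fin 4 → ℝ) : ℂ :=
  fderiv ℝ f x (Pi.single μ 1)

/-- Partial derivative in the μ-th coordinate direction of ℝ⁴ (ℝ-valued). -/
def pdR (μ : Fin 4) (f : (Fin 4 → ℝ) → ℝ) (x : Fin 4 → ℝ) : ℝ :=
  fderiv ℝ f x (Pi.single μ 1)

/-- Entrywise partial derivative of a matrix-valued function. -/
def pdM {m n : Type} (μ : Fin 4) (F : (Fin 4 → ℝ) → Matrix m n ℂ) (x : Fin 4 → ℝ) :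
    Matrix m n ℂ :=
  Matrix.of fun i j => pdC μ (fun y => F y i j) x


/-! ### Auxiliary lemmas for statement4 -/

lemma dgB_mul {m : Type} [Fintype m] (A B C D : Matrix m m ℂ) :
    dgB A B * dgB C D = dgB (A * C) (B * D) := by
  ext ⟨i, p⟩ ⟨j, q⟩
  fin_cases i <;> fin_cases j <;>
    simp [dgB, mul_apply, Fintype.sum_prod_type, Fin.sum_univ_two]

lemma dgB_sub {m : Type} (A B C D : Matrix m m ℂ) :
    dgB A B - dgB C D = dgB (A - C) (B - D) := by
  ext ⟨i, p⟩ ⟨j, q⟩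
  simp only [dgB, Matrix.sub_apply, Matrix.of_apply]
  split
  · split <;> simp
  · simp

lemma dgB_zero {m : Type} : dgB (0 : Matrix m m ℂ) 0 = 0 := by
  ext ⟨i, p⟩ ⟨j, q⟩
  simp only [dgB, Matrix.of_apply, Matrix.zero_apply]
  split
  · split <;> simp
  · simp

lemma liftI_mul (X Y : Matrix Intl Intl ℂ) : liftI X * liftI Y = liftI (X * Y) := by
  ext ⟨s, p⟩ ⟨t, q⟩
  simp [liftI, mul_apply, Fintype.sum_prod_type, Fin.sum_univ_two]

lemma diagI_conjTranspose (F : Fin 4 → Matrix Flav Flav ℂ) :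
    (diagI F)ᴴ = diagI fun i => (F i)ᴴ := by
  ext ⟨i, α⟩ ⟨j, β⟩
  simp only [diagI, conjTranspose_apply, Matrix.of_apply]
  rcases eq_or_ne i j with h | h
  · subst h; simp
  · simp [h, Ne.symm h]

lemma diagI_mul_msect (F : Fin 4 → Matrix Flav Flav ℂ) (A B : Matrix (Fin 4) (Fin 4) ℂ) :
    diagI F * msect A B = Matrix.of fun p q =>
      F p.1 p.2 q.2 * (if q.2.1 = 0 then A p.1 q.1 else B p.1 q.1) := by
  ext ⟨i, α⟩ ⟨j, β⟩
  simp [diagI, msect, mul_apply, Fintype.sum_prod_type, ite_and,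
    Finset.sum_ite_eq, Finset.sum_ite_eq']

lemma msect_mul_diagI (F : Fin 4 → Matrix Flav Flav ℂ) (A B : Matrix (Fin 4) (Fin 4) ℂ) :
    msect A B * diagI F = Matrix.of fun p q =>
      (if p.2.1 = 0 then A p.1 q.1 else B p.1 q.1) * F q.1 p.2 q.2 := by
  ext ⟨i, α⟩ ⟨j, β⟩
  simp [diagI, msect, mul_apply, Fintype.sum_prod_type, ite_and,
    Finset.sum_ite_eq, Finset.sum_ite_eq']

lemma D0_comm_msect (kν ke ku kd c c' : ℂ) (m m' : Matrix (Fin 3) (Fin 3) ℂ) :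
    (D0 kν ke ku kd)ᴴ * msect (sm4 c m) (sm4 c' m')
      = msect (sm4 c' m') (sm4 c m) * (D0 kν ke ku kd)ᴴ := by
  rw [D0, diagI_conjTranspose, diagI_mul_msect, msect_mul_diagI]
  ext ⟨i, a1, a2⟩ ⟨j, b1, b2⟩
  simp only [Matrix.of_apply, conjTranspose_apply, odB]
  fin_cases a1 <;> fin_cases b1 <;>
    rcases eq_or_ne i 0 with hi | hi <;> rcases eq_or_ne j 0 with hj | hj <;>
    simp [sm4, kdiag, mconj, hi, hj, mul_comm]

lemma key1 (kν ke ku kd : ℂ) (b : Alg) :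
    (D0 kν ke ku kd)ᴴ * Mr b = Ml b * (D0 kν ke ku kd)ᴴ :=
  D0_comm_msect kν ke ku kd b.c b.c' b.m b.m'

lemma key2 (kν ke ku kd : ℂ) (b : Alg) :
    (D0 kν ke ku kd)ᴴ * Ml b = Mr b * (D0 kν ke ku kd)ᴴ :=
  D0_comm_msect kν ke ku kd b.c' b.c b.m' b.m


/-- [γ⁵⊗D_Y, π(b)]_ρ = diag_C(S, 0), with
S = (η⊗D₀)·R − ρ(R)·(η⊗D₀); and the antiparticle block vanishes:
(η⊗D₀†)·N − ρ(N)·(η⊗D₀†) = 0. -/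
theorem statement4 (kν ke ku kd : ℂ) (b : Alg) :
    tcomm (g5DY kν ke ku kd) b
      = dgB (etaD (D0 kν ke ku kd) * Qmat b - Qmat b.rho * etaD (D0 kν ke ku kd))
          (0 : Matrix Half Half ℂ) ∧
    etaD ((D0 kν ke ku kd)ᴴ) * Mmat b - Mmat b.rho * etaD ((D0 kν ke ku kd)ᴴ) = 0 := by
  have h2 : etaD ((D0 kν ke ku kd)ᴴ) * Mmat b - Mmat b.rho * etaD ((D0 kν ke ku kd)ᴴ) = 0 := by
    show dgB (liftI ((D0 kν ke ku kd)ᴴ)) (liftI (-(D0 kν ke ku kd)ᴴ))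
          * dgB (liftI (Mr b)) (liftI (Ml b))
        - dgB (liftI (Ml b)) (liftI (Mr b))
          * dgB (liftI ((D0 kν ke ku kd)ᴴ)) (liftI (-(D0 kν ke ku kd)ᴴ)) = 0
    rw [dgB_mul, dgB_mul, dgB_sub, liftI_mul, liftI_mul, liftI_mul, liftI_mul,
      key1, neg_mul, mul_neg, key2, sub_self, sub_self, dgB_zero]
  refine ⟨?_, h2⟩
  show dgB (etaD (D0 kν ke ku kd)) (etaD ((D0 kν ke ku kd)ᴴ))
        * dgB (Qmat b) (Mmat b)
      - dgB (Qmat b.rho) (Mmat b.rho)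
        * dgB (etaD (D0 kν ke ku kd)) (etaD ((D0 kν ke ku kd)ᴴ)) = _
  rw [dgB_mul, dgB_mul, dgB_sub, h2]


end TwistSM
end
end

section
/- Let A_M = [[0, C],[D, 0]]_C be an off-diagonal twisted 1-form with C = k_R·δ_ṡ·diag_s(σ·Ξ, −σ'·Ξ), D = conj(k_R)·δ_ṡ·diag_s(σ·Ξ, −σ'·Ξ), and set σ_r := σ + conj(σ), σ_l := −(σ' + conj(σ')) (both real), Σ := diag_s(σ_r, σ_l). Then A_M + J·A_M·J⁻¹ = [[0, k_R·δ_ṡ·Σ⊗Ξ],[conj(k_R)·δ_ṡ·Σ⊗Ξ, 0]]_C, and hence the off-diagonal twisted fluctuation D_{A_M} := γ⁵⊗D_M + A_M + J·A_M·J⁻¹ equals [[0, η⊗D_R + k_R·δ_ṡ·Σ⊗Ξ],[η⊗D_R† + conj(k_R)·δ_ṡ·Σ⊗Ξ, 0]]_C; in particular D_{A_M} is Hermitian and is parametrized by the two independent real scalars σ_r, σ_l. -/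
open Matrix

noncomputable section

namespace TwistSM

/-! ### Auxiliary machinery for statement 9 -/

abbrev Trip : Type := Fin 2 × Fin 2 × Fin 2

/-- Tensor-type matrix on ℂ¹²⁸: a (C,s,ṡ)-part times an (I,α)-part. -/
def T2 (G : Matrix Trip Trip ℂ) (X : Matrix Intl Intl ℂ) : Matrix Full Full ℂ :=
  Matrix.of fun p q =>
    G (p.1, p.2.1, p.2.2.1) (q.1, q.2.1, q.2.2.1) * X p.2.2.2 q.2.2.2

/-- Full ≃ Trip × Intl. -/
def eF : Full ≃ Trip × Intl where
  toFun p := ((p.1, p.2.1, p.2.2.1), p.2.2.2)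
  invFun z := (z.1.1, z.1.2.1, z.1.2.2, z.2)
  left_inv _ := rfl
  right_inv _ := rfl

lemma T2_mul (G G' : Matrix Trip Trip ℂ) (X X' : Matrix Intl Intl ℂ) :
    T2 G X * T2 G' X' = T2 (G * G') (X * X') := by
  ext p q
  simp only [T2, Matrix.mul_apply, Matrix.of_apply]
  rw [Fintype.sum_mul_sum, ← Finset.sum_product', Finset.univ_product_univ]
  exact Fintype.sum_equiv eF _ _ fun j => by simp only [eF, Equiv.coe_fn_mk]; ring

lemma T2_add (G G' : Matrix Trip Trip ℂ) (X : Matrix Intl Intl ℂ) :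
    T2 G X + T2 G' X = T2 (G + G') X := by
  ext p q
  simp [T2, add_mul]

lemma T2_neg (G : Matrix Trip Trip ℂ) (X : Matrix Intl Intl ℂ) :
    -(T2 G X) = T2 (-G) X := by
  ext p q
  simp [T2]

lemma mconj_T2 (G : Matrix Trip Trip ℂ) (X : Matrix Intl Intl ℂ) :
    mconj (T2 G X) = T2 (mconj G) (mconj X) := by
  ext p q
  simp [T2, mconj]

lemma mconj_one : mconj (1 : Matrix Intl Intl ℂ) = 1 := by
  ext p q
  simp [mconj, Matrix.one_apply, apply_ite]

lemma mconj_XiI : mconj XiI = XiI := by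
  ext p q
  simp [mconj, XiI, apply_ite]
/-- Flip of the C and ṡ indices. -/
def flipT (a : Trip) : Trip :=
  ((if a.1 = 0 then 1 else 0), a.2.1, (if a.2.2 = 0 then 1 else 0))

/-- Phase of the charge conjugation matrix. -/
def ph (a : Trip) : ℂ :=
  if a.2.1 = 0 then (if a.2.2 = 0 then Complex.I else -Complex.I)
  else (if a.2.2 = 0 then -Complex.I else Complex.I)

/-- Explicit form of the spinor part of K. -/
def GKex : Matrix Trip Trip ℂ := Matrix.of fun a b => if b = flipT a then ph a else 0

lemma flipT_flipT (a : Trip) : flipT (flipT a) = a := by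
  obtain ⟨c, s, d⟩ := a
  fin_cases c <;> fin_cases d <;> rfl

lemma Kspin_eq : Kspin = Matrix.of fun a b =>
    if a.1 = b.1 ∧ b.2 = (if a.2 = 0 then 1 else 0) then
      (if a.1 = 0 then (if a.2 = 0 then Complex.I else -Complex.I)
       else (if a.2 = 0 then -Complex.I else Complex.I))
    else 0 := by
  ext ⟨s, d⟩ ⟨s', d'⟩
  fin_cases s <;> fin_cases s' <;> fin_cases d <;> fin_cases d' <;>
    simp [Kspin, gammaE, odB, sigE, sigTE, pauli1, pauli2, pauli3,
      Matrix.mul_apply, Fintype.sum_prod_type, Fin.sum_univ_two, Matrix.one_apply]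

lemma Kmat_eq : Kmat = T2 GKex 1 := by
  ext ⟨c, s, d, x⟩ ⟨c', s', d', x'⟩
  simp only [Kmat, T2, GKex, Matrix.of_apply, Matrix.one_apply, Kspin_eq]
  fin_cases c <;> fin_cases c' <;> fin_cases s <;> fin_cases s' <;> fin_cases d <;> fin_cases d' <;>
    simp [flipT, ph, Prod.ext_iff]

/-- The spinor-part coefficient matrix of the 1-form A_M. -/
def GA (kR a b : ℂ) : Matrix Trip Trip ℂ := Matrix.of fun p q =>
  if p.2.1 = q.2.1 ∧ p.2.2 = q.2.2 then
    (if p.1 = 0 then (if q.1 = 0 then 0 else kR)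
     else (if q.1 = 0 then (starRingEnd ℂ) kR else 0)) *
    (if p.2.1 = 0 then a else -b)
  else 0

/-- The inner s-diagonal block of A_M. -/
def S0' (a b : ℂ) : Matrix Half Half ℂ := dgB (liftI (a • XiI)) (liftI ((-b) • XiI))

set_option maxHeartbeats 1000000 in
lemma odB_eq_T2 (kR a b : ℂ) :
    odB (kR • S0' a b) ((starRingEnd ℂ) kR • S0' a b) = T2 (GA kR a b) XiI := by
  ext ⟨c, s, d, x⟩ ⟨c', s', d', x'⟩
  simp only [odB, S0', dgB, liftI, GA, T2, Matrix.smul_apply, Matrix.of_apply, smul_eq_mul]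
  split_ifs <;> (try (exfalso; tauto)) <;> ring

lemma GA_add (kR a b a' b' : ℂ) :
    GA kR a b + GA kR a' b' = GA kR (a + a') (b + b') := by
  ext p q
  simp only [GA, Matrix.add_apply, Matrix.of_apply]
  split_ifs <;> ring

lemma GKex_mul (M : Matrix Trip Trip ℂ) :
    GKex * M = Matrix.of fun a b => ph a * M (flipT a) b := by
  ext a b
  simp [GKex, Matrix.mul_apply, ite_mul]

lemma mul_mconj_GKex (M : Matrix Trip Trip ℂ) :
    M * mconj GKex = Matrix.of fun a b => M a (flipT b) * (starRingEnd ℂ) (ph (flipT b)) := by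
  ext a b
  have hc : ∀ t : Trip, (b = flipT t) ↔ (t = flipT b) := by
    intro t
    constructor
    · intro h; rw [h, flipT_flipT]
    · intro h; rw [h, flipT_flipT]
  simp [mconj, GKex, Matrix.mul_apply, apply_ite, hc, mul_ite]

set_option maxHeartbeats 1000000 in
lemma key (kR a b : ℂ) :
    -(GKex * mconj (GA kR a b) * mconj GKex)
      = GA kR ((starRingEnd ℂ) a) ((starRingEnd ℂ) b) := by
  rw [mul_mconj_GKex, GKex_mul]
  ext ⟨c, s, d⟩ ⟨c', s', d'⟩
  fin_cases c <;> fin_cases c' <;> fin_cases s <;> fin_cases s' <;> fin_cases d <;> fin_cases d' <;>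
    simp [GA, ph, flipT, mconj, Prod.ext_iff, _root_.map_mul] <;> ring_nf <;> simp [Complex.I_sq]

lemma odB_add {m : Type} (A B C D : Matrix m m ℂ) :
    odB A B + odB C D = odB (A + C) (B + D) := by
  ext ⟨i, p⟩ ⟨j, q⟩
  simp only [odB, Matrix.add_apply, Matrix.of_apply]
  split_ifs <;> simp

lemma odB_conjT {m : Type} [Fintype m] [DecidableEq m] (A B : Matrix m m ℂ) :
    (odB A B)ᴴ = odB Bᴴ Aᴴ := by
  ext ⟨i, p⟩ ⟨j, q⟩
  fin_cases i <;> fin_cases j <;>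
    simp [odB, Matrix.conjTranspose_apply]

lemma dgB_conjT {m : Type} [Fintype m] [DecidableEq m] (A B : Matrix m m ℂ) :
    (dgB A B)ᴴ = dgB Aᴴ Bᴴ := by
  ext ⟨i, p⟩ ⟨j, q⟩
  fin_cases i <;> fin_cases j <;>
    simp [dgB, Matrix.conjTranspose_apply]

lemma liftI_conjT (X : Matrix Intl Intl ℂ) : (liftI X)ᴴ = liftI Xᴴ := by
  ext ⟨i, p⟩ ⟨j, q⟩
  by_cases h : i = j <;>
    simp [liftI, Matrix.conjTranspose_apply, h, eq_comm]

lemma etaD_conjT (X : Matrix Intl Intl ℂ) : (etaD X)ᴴ = etaD Xᴴ := by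
  simp only [etaD, dgB_conjT, liftI_conjT, Matrix.conjTranspose_neg]

lemma XiI_conjT : XiIᴴ = XiI := by
  ext p q
  simp only [XiI, Matrix.conjTranspose_apply, Matrix.of_apply]
  by_cases h : p = q
  · subst h; split_ifs <;> simp
  · rw [if_neg (fun hc => h hc.1.symm), if_neg (fun hc => h hc.1)]; exact star_zero _

/-- the off-diagonal twisted fluctuation.  With σ_r = σ + conj σ and
σ_l = −(σ' + conj σ') (both real) and Σ = diag_s(σ_r, σ_l), one has
A_M + J·A_M·J⁻¹ = [[0, k_R δ_ṡ Σ⊗Ξ],[conj(k_R) δ_ṡ Σ⊗Ξ, 0]]_C, hence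
D_{A_M} = [[0, η⊗D_R + k_R δ_ṡ Σ⊗Ξ],[η⊗D_R† + conj(k_R) δ_ṡ Σ⊗Ξ, 0]]_C is Hermitian. -/
theorem statement9 (kR σ σ' : ℂ) :
    let σr : ℂ := σ + (starRingEnd ℂ) σ
    let σl : ℂ := -(σ' + (starRingEnd ℂ) σ')
    let S0 : Matrix Half Half ℂ := dgB (liftI (σ • XiI)) (liftI ((-σ') • XiI))
    let AM : Matrix Full Full ℂ := odB (kR • S0) ((starRingEnd ℂ) kR • S0)
    let Sg : Matrix Half Half ℂ := dgB (liftI (σr • XiI)) (liftI (σl • XiI))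
    (starRingEnd ℂ) σr = σr ∧ (starRingEnd ℂ) σl = σl ∧
    AM + Jconj AM = odB (kR • Sg) ((starRingEnd ℂ) kR • Sg) ∧
    g5DM kR + AM + Jconj AM
      = odB (etaD (kR • XiI) + kR • Sg) (etaD ((kR • XiI)ᴴ) + (starRingEnd ℂ) kR • Sg) ∧
    (g5DM kR + AM + Jconj AM).IsHermitian := by
  intro σr σl S0 AM Sg
  have hσr : (starRingEnd ℂ) σr = σr := by
    show (starRingEnd ℂ) (σ + (starRingEnd ℂ) σ) = σ + (starRingEnd ℂ) σ
    rw [map_add, Complex.conj_conj, add_comm]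
  have hσl : (starRingEnd ℂ) σl = σl := by
    show (starRingEnd ℂ) (-(σ' + (starRingEnd ℂ) σ')) = -(σ' + (starRingEnd ℂ) σ')
    rw [map_neg, map_add, Complex.conj_conj, add_comm]
  have hAM : AM = T2 (GA kR σ σ') XiI := odB_eq_T2 kR σ σ'
  have hJ : Jconj AM = T2 (GA kR ((starRingEnd ℂ) σ) ((starRingEnd ℂ) σ')) XiI := by
    rw [hAM]
    show -(Kmat * mconj (T2 (GA kR σ σ') XiI) * mconj Kmat) = _
    rw [Kmat_eq, mconj_T2, mconj_T2, mconj_one, mconj_XiI, T2_mul, T2_mul,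
      one_mul, mul_one, T2_neg, key]
  have h3 : AM + Jconj AM = odB (kR • Sg) ((starRingEnd ℂ) kR • Sg) := by
    rw [hJ, hAM, T2_add, GA_add]
    exact (odB_eq_T2 kR (σ + (starRingEnd ℂ) σ) (σ' + (starRingEnd ℂ) σ')).symm
  have h4 : g5DM kR + AM + Jconj AM
      = odB (etaD (kR • XiI) + kR • Sg) (etaD ((kR • XiI)ᴴ) + (starRingEnd ℂ) kR • Sg) := by
    rw [add_assoc, h3]
    show odB (etaD (kR • XiI)) (etaD ((kR • XiI)ᴴ)) + _ = _
    rw [odB_add]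
  have hSg : Sgᴴ = Sg := by
    show (dgB (liftI (σr • XiI)) (liftI (σl • XiI)))ᴴ = dgB (liftI (σr • XiI)) (liftI (σl • XiI))
    rw [dgB_conjT, liftI_conjT, liftI_conjT, Matrix.conjTranspose_smul,
      Matrix.conjTranspose_smul, XiI_conjT]
    simp only [Complex.star_def, hσr, hσl]
  refine ⟨hσr, hσl, h3, h4, ?_⟩
  have hQ : (etaD ((kR • XiI)ᴴ) + (starRingEnd ℂ) kR • Sg)ᴴ = etaD (kR • XiI) + kR • Sg := by
    rw [Matrix.conjTranspose_add, etaD_conjT, Matrix.conjTranspose_conjTranspose,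
      Matrix.conjTranspose_smul, hSg]
    simp only [Complex.star_def, Complex.conj_conj]
  have hP : (etaD (kR • XiI) + kR • Sg)ᴴ = etaD ((kR • XiI)ᴴ) + (starRingEnd ℂ) kR • Sg := by
    rw [Matrix.conjTranspose_add, etaD_conjT, Matrix.conjTranspose_smul kR Sg, hSg]
    simp only [Complex.star_def]
  rw [Matrix.IsHermitian, h4, odB_conjT, hQ, hP]


end TwistSM
end
end
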